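/- If w : ℝ^n → [0,∞] satisfies M(w)(x) < ∞ for almost every x, then for every 0 < δ < 1 the function (M(w))^δ is an A_1 weight, i.e., M((M w)^δ)(x) ≤ C (M w(x))^δ for a.e. x, with constant C depending only on n and δ (not on w). -/

import Mathlib

/-!
Fix a ball `Q = closedBall z ρ` containing `x` and split `w` into `w₁ = w · 1_{3Q}` and the rest.
A ball through a point of `Q` that leaves `3Q` has radius larger than `ρ`, so its triple contains
`x`: on `Q`, `M w ≤ M w₁ + 3ⁿ M w(x)`. The near part obeys the weak (1,1) bound
`|{M w₁ > t}| ≤ 4ⁿ ‖w₁‖₁ / t` (Vitali covering), and `‖w₁‖₁ ≤ 3ⁿ |Q| M w(x)`. For `δ < 1`,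
Kolmogorov's inequality turns this weak bound into `⨍_Q (M w₁)^δ ≲ (12ⁿ M w(x))^δ`, and
subadditivity of `t ↦ t^δ` adds the two parts. Cubes are sup-norm balls of `Fin n → ℝ`, so
everything is done with balls.
-/

open MeasureTheory ENNReal Set Metric

noncomputable section

def cube (n : ℕ) (x : Fin n → ℝ) (r : ℝ) : Set (Fin n → ℝ) :=
  {y | ∀ i, |y i - x i| ≤ r / 2}

def maxU (n : ℕ) (g : (Fin n → ℝ) → ℝ≥0∞) (x : Fin n → ℝ) : ℝ≥0∞ :=
  ⨆ (z : Fin n → ℝ) (r : ℝ) (_ : 0 < r) (_ : x ∈ cube n z r),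
    (volume (cube n z r))⁻¹ * ∫⁻ y in cube n z r, g y

section Kolmogorov

lemma rpow_le_add_tsum_dyadic {x l : ℝ≥0∞} (hl0 : l ≠ 0) (hlt : l ≠ ⊤) {δ : ℝ} (hδ : 0 ≤ δ) :
    x ^ δ ≤ l ^ δ + ∑' j : ℕ, if 2 ^ j * l < x then (2 ^ (j + 1) * l) ^ δ else 0 := by
  have hterm_ne_top : ∀ j : ℕ, 2 ^ j * l ≠ ⊤ := fun j => mul_ne_top (pow_ne_top ofNat_ne_top) hlt
  rcases eq_top_or_lt_top x with rfl | hx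
  · refine le_top.trans_eq (top_unique ?_).symm
    calc (⊤ : ℝ≥0∞) = ∑' _ : ℕ, l ^ δ := (ENNReal.tsum_const_eq_top_of_ne_zero
          (ENNReal.rpow_pos (pos_iff_ne_zero.2 hl0) hlt).ne').symm
      _ ≤ ∑' j : ℕ, if 2 ^ j * l < ⊤ then (2 ^ (j + 1) * l) ^ δ else 0 := by
        refine ENNReal.tsum_le_tsum fun j => ?_
        rw [if_pos (lt_top_iff_ne_top.2 (hterm_ne_top j))]
        exact ENNReal.rpow_le_rpow (le_mul_of_one_le_left' (one_le_pow₀ one_le_two)) hδ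
      _ ≤ _ := le_add_self
  have bound : ∀ m : ℕ, x ≤ 2 ^ m * l →
      x ^ δ ≤ l ^ δ + ∑ j ∈ Finset.range m, if 2 ^ j * l < x then (2 ^ (j + 1) * l) ^ δ else 0 := by
    intro m
    induction m with
    | zero => intro h; simpa using ENNReal.rpow_le_rpow h hδ
    | succ m ih =>
      intro h
      rw [Finset.sum_range_succ, ← add_assoc]
      by_cases hm : x ≤ 2 ^ m * l
      · exact (ih hm).trans le_self_add
      · rw [if_pos (not_le.1 hm)]
        exact (ENNReal.rpow_le_rpow h hδ).trans le_add_self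
  obtain ⟨m, hm⟩ := ENNReal.exists_nat_gt (ENNReal.div_lt_top hx.ne hl0).ne
  have hxm : x ≤ 2 ^ m * l := by
    rw [← ENNReal.div_mul_cancel hl0 hlt (b := x)]
    gcongr
    exact hm.le.trans (by exact_mod_cast (Nat.lt_two_pow_self (n := m)).le)
  exact (bound m hxm).trans (add_le_add_right (ENNReal.sum_le_tsum _) _)

lemma rpow_dyadic_mul_div_eq {l : ℝ≥0∞} (hl0 : l ≠ 0) (hlt : l ≠ ⊤) (δ : ℝ) (m : ℝ≥0∞) (j : ℕ) :
    (2 ^ (j + 1) * l) ^ δ * (l / (2 ^ j * l) * m) = 2 ^ δ * (2 ^ (δ - 1)) ^ j * (l ^ δ * m) := by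
  have h2j : (2 : ℝ≥0∞) ^ j ≠ 0 := pow_ne_zero _ two_ne_zero
  have h2jt : (2 : ℝ≥0∞) ^ j ≠ ⊤ := pow_ne_top ofNat_ne_top
  have hdiv : l / (2 ^ j * l) = (2 ^ j)⁻¹ := by
    rw [ENNReal.div_eq_inv_mul, ENNReal.mul_inv (Or.inl h2j) (Or.inl h2jt), mul_assoc,
      ENNReal.inv_mul_cancel hl0 hlt, mul_one]
  have hpow : ((2 : ℝ≥0∞) ^ (j + 1)) ^ δ * (2 ^ j)⁻¹ = 2 ^ δ * (2 ^ (δ - 1)) ^ j := by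
    rw [← ENNReal.rpow_natCast, ← ENNReal.rpow_natCast, ← ENNReal.rpow_natCast,
      ← ENNReal.rpow_neg, ← ENNReal.rpow_mul, ← ENNReal.rpow_mul,
      ← ENNReal.rpow_add _ _ two_ne_zero ofNat_ne_top,
      ← ENNReal.rpow_add _ _ two_ne_zero ofNat_ne_top]
    congr 1; push_cast; ring
  rw [hdiv, ENNReal.mul_rpow_of_ne_top (pow_ne_top ofNat_ne_top) hlt, ← hpow]
  ring

def kolmogorovConst (δ : ℝ) : ℝ≥0∞ := 1 + 2 ^ δ * (1 - 2 ^ (δ - 1))⁻¹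

lemma kolmogorovConst_lt_top {δ : ℝ} (hδ : δ < 1) : kolmogorovConst δ < ⊤ := by
  have hr : (2 : ℝ≥0∞) ^ (δ - 1) < 1 :=
    ENNReal.rpow_lt_one_of_one_lt_of_neg one_lt_two (by linarith)
  refine add_lt_top.2 ⟨one_lt_top, mul_lt_top ?_ ?_⟩
  · exact lt_top_iff_ne_top.2 (rpow_ne_top_of_ne_zero two_ne_zero ofNat_ne_top)
  · exact ENNReal.inv_lt_top.2 (tsub_pos_of_lt hr)

lemma one_le_kolmogorovConst (δ : ℝ) : 1 ≤ kolmogorovConst δ := le_self_add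

variable {α : Type*} [MeasurableSpace α] {μ : Measure α}

/-- Kolmogorov's inequality. -/
theorem setLIntegral_rpow_le_of_measure_lt_le {f : α → ℝ≥0∞} {s : Set α} {l : ℝ≥0∞}
    (hl0 : l ≠ 0) (hlt : l ≠ ⊤) (hf : ∀ t, t ≠ 0 → t ≠ ⊤ → μ {y | t < f y} ≤ l / t * μ s)
    {δ : ℝ} (hδ : 0 ≤ δ) :
    ∫⁻ y in s, f y ^ δ ∂μ ≤ kolmogorovConst δ * l ^ δ * μ s := by
  -- `f` need not be measurable: the level sets are replaced by measurable hulls of equal measure.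
  set T : ℕ → Set α := fun j => toMeasurable μ {y | 2 ^ j * l < f y}
  have hT : ∀ j, μ (T j) ≤ l / (2 ^ j * l) * μ s := fun j => by
    rw [measure_toMeasurable]
    exact hf _ (mul_ne_zero (pow_ne_zero _ two_ne_zero) hl0)
      (mul_ne_top (pow_ne_top ofNat_ne_top) hlt)
  have hpt : ∀ y, f y ^ δ ≤ l ^ δ + ∑' j, (T j).indicator (fun _ => (2 ^ (j + 1) * l) ^ δ) y := by
    intro y
    refine (rpow_le_add_tsum_dyadic hl0 hlt hδ).trans
      (add_le_add_right (ENNReal.tsum_le_tsum fun j => ?_) _)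
    split_ifs with h
    · rw [indicator_of_mem (show y ∈ T j from subset_toMeasurable _ _ h)]
    · exact zero_le
  calc ∫⁻ y in s, f y ^ δ ∂μ
      ≤ ∫⁻ y in s, (l ^ δ + ∑' j, (T j).indicator (fun _ => (2 ^ (j + 1) * l) ^ δ) y) ∂μ :=
        lintegral_mono hpt
    _ = l ^ δ * μ s + ∑' j, (2 ^ (j + 1) * l) ^ δ * μ.restrict s (T j) := by
        rw [lintegral_add_left measurable_const, setLIntegral_const,
          lintegral_tsum fun j =>
            (measurable_const.indicator (measurableSet_toMeasurable _ _)).aemeasurable]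
        simp_rw [lintegral_indicator_const (measurableSet_toMeasurable _ _)]
        rfl
    _ ≤ l ^ δ * μ s + ∑' j, 2 ^ δ * (2 ^ (δ - 1)) ^ j * (l ^ δ * μ s) := by
        refine add_le_add_right (ENNReal.tsum_le_tsum fun j => ?_) _
        rw [← rpow_dyadic_mul_div_eq hl0 hlt]
        exact mul_le_mul_right ((Measure.restrict_apply_le _ _).trans (hT j)) _
    _ = kolmogorovConst δ * l ^ δ * μ s := by
        rw [ENNReal.tsum_mul_right, ENNReal.tsum_mul_left, ENNReal.tsum_geometric, kolmogorovConst]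
        ring

end Kolmogorov

variable {n : ℕ}

def ballAverage (g : (Fin n → ℝ) → ℝ≥0∞) (z : Fin n → ℝ) (ρ : ℝ) : ℝ≥0∞ :=
  (volume (closedBall z ρ))⁻¹ * ∫⁻ y in closedBall z ρ, g y

def ballMaximal (g : (Fin n → ℝ) → ℝ≥0∞) (x : Fin n → ℝ) : ℝ≥0∞ :=
  ⨆ (z : Fin n → ℝ) (ρ : ℝ) (_ : 0 < ρ) (_ : x ∈ closedBall z ρ), ballAverage g z ρ

section ballMaximal

variable {g : (Fin n → ℝ) → ℝ≥0∞} {x z : Fin n → ℝ} {ρ : ℝ}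

lemma ballAverage_le_ballMaximal (hρ : 0 < ρ) (hx : x ∈ closedBall z ρ) :
    ballAverage g z ρ ≤ ballMaximal g x :=
  le_iSup_of_le z <| le_iSup_of_le ρ <| le_iSup_of_le hρ <| le_iSup_of_le hx le_rfl

lemma ballMaximal_le {c : ℝ≥0∞}
    (h : ∀ z ρ, 0 < ρ → x ∈ closedBall z ρ → ballAverage g z ρ ≤ c) : ballMaximal g x ≤ c :=
  iSup_le fun z => iSup_le fun ρ => iSup_le fun hρ => iSup_le fun hx => h z ρ hρ hx

lemma cube_eq_closedBall (z : Fin n → ℝ) {r : ℝ} (hr : 0 ≤ r) :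
    cube n z r = closedBall z (r / 2) := by
  ext y
  simp only [cube, mem_ofPred_eq, mem_closedBall, dist_pi_le_iff (by linarith : 0 ≤ r / 2),
    Real.dist_eq]

theorem maxU_eq_ballMaximal (g : (Fin n → ℝ) → ℝ≥0∞) (x : Fin n → ℝ) :
    maxU n g x = ballMaximal g x := by
  refine le_antisymm (iSup_le fun z => iSup_le fun r => iSup_le fun hr => iSup_le fun hx => ?_)
    (ballMaximal_le fun z ρ hρ hx => ?_)
  · rw [cube_eq_closedBall z hr.le] at hx ⊢
    exact ballAverage_le_ballMaximal (half_pos hr) hx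
  · have hcube : cube n z (2 * ρ) = closedBall z ρ := by
      rw [cube_eq_closedBall z (by linarith), mul_div_cancel_left₀ _ two_ne_zero]
    refine le_iSup_of_le z <| le_iSup_of_le (2 * ρ) <| le_iSup_of_le (by linarith) ?_
    rw [hcube]
    exact le_iSup_of_le hx le_rfl

lemma volume_closedBall_natCast_mul (z : Fin n → ℝ) (hρ : 0 ≤ ρ) (k : ℕ) :
    volume (closedBall z (k * ρ)) = k ^ n * volume (closedBall z ρ) := by
  rw [Real.volume_pi_closedBall z (by positivity), Real.volume_pi_closedBall z hρ,
    Fintype.card_fin, mul_left_comm, mul_pow, ENNReal.ofReal_mul (by positivity),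
    ENNReal.ofReal_pow (Nat.cast_nonneg k), ENNReal.ofReal_natCast]

lemma ballAverage_le_pow_mul_ballAverage (g : (Fin n → ℝ) → ℝ≥0∞) (z : Fin n → ℝ) (hρ : 0 < ρ)
    {k : ℕ} (hk : 1 ≤ k) : ballAverage g z ρ ≤ k ^ n * ballAverage g z (k * ρ) := by
  have hk0 : (k : ℝ≥0∞) ^ n ≠ 0 := pow_ne_zero _ (Nat.cast_ne_zero.2 (by omega))
  have hkt : (k : ℝ≥0∞) ^ n ≠ ⊤ := pow_ne_top (natCast_ne_top k)
  rw [ballAverage, ballAverage, volume_closedBall_natCast_mul z hρ.le,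
    ENNReal.mul_inv (Or.inl hk0) (Or.inl hkt), ← mul_assoc, ← mul_assoc,
    ENNReal.mul_inv_cancel hk0 hkt, one_mul]
  have hk' : (1 : ℝ) ≤ k := by exact_mod_cast hk
  exact mul_le_mul_right
    (lintegral_mono_set (closedBall_subset_closedBall (le_mul_of_one_le_left hρ.le hk'))) _

lemma setLIntegral_closedBall_le_mul_ballMaximal (hρ : 0 < ρ) (hx : x ∈ closedBall z ρ) :
    ∫⁻ y in closedBall z ρ, g y ≤ volume (closedBall z ρ) * ballMaximal g x := by
  rw [← ENNReal.div_le_iff' (measure_closedBall_pos volume z hρ).ne'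
    measure_closedBall_lt_top.ne, ENNReal.div_eq_inv_mul]
  exact ballAverage_le_ballMaximal hρ hx

lemma ballMaximal_eq_zero_of_lintegral_eq_zero (h : ∫⁻ y, g y = 0) (x : Fin n → ℝ) :
    ballMaximal g x = 0 :=
  le_antisymm (ballMaximal_le fun z ρ _ _ => by
    have := setLIntegral_le_lintegral (μ := volume) (closedBall z ρ) g
    rw [h, nonpos_iff_eq_zero] at this
    rw [ballAverage, this, mul_zero]) zero_le

end ballMaximal

section weakType

variable {v : (Fin n → ℝ) → ℝ≥0∞} {z : Fin n → ℝ} {ρ : ℝ} {t : ℝ≥0∞}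

lemma volume_closedBall_le_of_lt_ballAverage (ht0 : t ≠ 0) (htop : t ≠ ⊤)
    (h : t < ballAverage v z ρ) :
    volume (closedBall z ρ) ≤ (∫⁻ y in closedBall z ρ, v y) / t := by
  rw [ENNReal.le_div_iff_mul_le (Or.inl ht0) (Or.inl htop), mul_comm]
  rw [ballAverage, ← ENNReal.div_eq_inv_mul] at h
  exact ENNReal.mul_le_of_le_div h.le

lemma le_max_one_of_volume_closedBall_le (hn : n ≠ 0) {K : ℝ≥0∞} (hK : K ≠ ⊤) (hρ : 0 ≤ ρ)
    (h : volume (closedBall z ρ) ≤ K) : ρ ≤ max 1 K.toReal := by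
  rw [Real.volume_pi_closedBall z hρ, Fintype.card_fin, ENNReal.ofReal_le_iff_le_toReal hK] at h
  rcases le_or_gt (2 * ρ) 1 with h1 | h1
  · exact le_max_of_le_left (by linarith)
  · exact le_max_of_le_right (by linarith [le_self_pow₀ h1.le hn])

lemma volume_le_of_subset_iUnion_closedBall {ι : Type*} {E : Set (Fin n → ℝ)}
    {c : ι → Fin n → ℝ} {r : ι → ℝ} (hr : ∀ i, 0 < r i) {R : ℝ} (hR : ∀ i, r i ≤ R)
    (hE : E ⊆ ⋃ i, closedBall (c i) (r i))
    (hvol : ∀ i, volume (closedBall (c i) (r i)) ≤ (∫⁻ y in closedBall (c i) (r i), v y) / t) :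
    volume E ≤ 4 ^ n * (∫⁻ y, v y) / t := by
  set B : ι → Set (Fin n → ℝ) := fun i => closedBall (c i) (r i)
  obtain ⟨u, -, hdisj, hcov⟩ := Vitali.exists_disjoint_subfamily_covering_enlargement_closedBall
    univ c r R (fun i _ => hR i) 4 (by norm_num)
  have hu : u.Countable := hdisj.countable_of_nonempty_interior fun i _ => by
    rw [interior_closedBall _ (hr i).ne']
    exact nonempty_ball.2 (hr i)
  have : Countable u := hu.to_subtype
  have hE' : E ⊆ ⋃ b : u, closedBall (c b) ((4 : ℕ) * r b) := fun y hy => by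
    obtain ⟨i, hi⟩ := mem_iUnion.1 (hE hy)
    obtain ⟨b, hb, hsub⟩ := hcov i (mem_univ _)
    exact mem_iUnion.2 ⟨⟨b, hb⟩, by exact_mod_cast hsub hi⟩
  calc volume E ≤ ∑' b : u, volume (closedBall (c b) ((4 : ℕ) * r b)) :=
        (measure_mono hE').trans (measure_iUnion_le _)
    _ = ∑' b : u, 4 ^ n * volume (B b) := by
        simp_rw [volume_closedBall_natCast_mul _ (hr _).le]
        rfl
    _ ≤ ∑' b : u, 4 ^ n * ((∫⁻ y in B b, v y) / t) := by gcongr; exact hvol _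
    _ = 4 ^ n * (∫⁻ y in ⋃ b : u, B b, v y) / t := by
        rw [lintegral_iUnion (s := fun b : u => B b) (fun _ => measurableSet_closedBall)
          fun b b' hbb' => hdisj b.2 b'.2 (Subtype.coe_injective.ne hbb')]
        simp_rw [ENNReal.div_eq_inv_mul, ENNReal.tsum_mul_left]
        ring
    _ ≤ 4 ^ n * (∫⁻ y, v y) / t := by gcongr; exact Measure.restrict_le_self

theorem volume_setOf_lt_ballMaximal_le_of_ne_zero (hn : n ≠ 0) (v : (Fin n → ℝ) → ℝ≥0∞)
    (ht0 : t ≠ 0) (htop : t ≠ ⊤) :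
    volume {y | t < ballMaximal v y} ≤ 4 ^ n * (∫⁻ y, v y) / t := by
  rcases eq_or_ne (∫⁻ y, v y) ⊤ with hI | hI
  · simp [hI, ENNReal.top_div, htop]
  set E := {y | t < ballMaximal v y}
  have hsel : ∀ a : E, ∃ c r, (a : Fin n → ℝ) ∈ closedBall c r ∧ 0 < r ∧ t < ballAverage v c r := by
    intro a
    have ha : t < ballMaximal v a := a.2
    simpa [ballMaximal, lt_iSup_iff] using ha
  choose c r hmem hr hlt using hsel
  have hvol : ∀ a, volume (closedBall (c a) (r a)) ≤ (∫⁻ y in closedBall (c a) (r a), v y) / t :=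
    fun a => volume_closedBall_le_of_lt_ballAverage ht0 htop (hlt a)
  have hR : ∀ a, r a ≤ max 1 ((∫⁻ y, v y) / t).toReal := fun a =>
    le_max_one_of_volume_closedBall_le hn (ENNReal.div_ne_top hI ht0) (hr a).le
      ((hvol a).trans (by gcongr; exact Measure.restrict_le_self))
  exact volume_le_of_subset_iUnion_closedBall hr hR
    (fun y hy => mem_iUnion.2 ⟨⟨y, hy⟩, hmem ⟨y, hy⟩⟩) hvol

lemma ballMaximal_le_lintegral_of_dim_zero (hn : n = 0) (v : (Fin n → ℝ) → ℝ≥0∞)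
    (x : Fin n → ℝ) : ballMaximal v x ≤ ∫⁻ y, v y :=
  ballMaximal_le fun z ρ hρ _ => by
    subst hn
    rw [ballAverage, Real.volume_pi_closedBall z hρ.le, Fintype.card_fin, pow_zero,
      ENNReal.ofReal_one, inv_one, one_mul]
    exact setLIntegral_le_lintegral _ _

theorem volume_setOf_lt_ballMaximal_le (v : (Fin n → ℝ) → ℝ≥0∞) (ht0 : t ≠ 0) (htop : t ≠ ⊤) :
    volume {y | t < ballMaximal v y} ≤ 4 ^ n * (∫⁻ y, v y) / t := by
  rcases eq_or_ne n 0 with hn | hn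
  · subst hn
    rcases {y | t < ballMaximal v y}.eq_empty_or_nonempty with hE | ⟨y, hy⟩
    · rw [hE, measure_empty]
      exact zero_le
    calc volume {y | t < ballMaximal v y} ≤ volume (closedBall y 1) :=
          measure_mono fun x _ => by simp [Subsingleton.elim x y]
      _ = 1 := by simp [Real.volume_pi_closedBall y zero_le_one]
      _ ≤ 4 ^ 0 * (∫⁻ y, v y) / t := by
        rw [pow_zero, one_mul, ENNReal.le_div_iff_mul_le (Or.inl ht0) (Or.inl htop), one_mul]
        exact (lt_of_lt_of_le hy (ballMaximal_le_lintegral_of_dim_zero rfl v y)).le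
  · exact volume_setOf_lt_ballMaximal_le_of_ne_zero hn v ht0 htop

end weakType

section A1

variable {w : (Fin n → ℝ) → ℝ≥0∞} {x y z : Fin n → ℝ} {ρ : ℝ}

lemma ballMaximal_le_ballMaximal_indicator_add (hx : x ∈ closedBall z ρ)
    (hy : y ∈ closedBall z ρ) :
    ballMaximal w y ≤
      ballMaximal ((closedBall z (3 * ρ)).indicator w) y + 3 ^ n * ballMaximal w x := by
  refine ballMaximal_le fun z' ρ' hρ' hy' => ?_
  rw [mem_closedBall] at hx hy hy'
  rcases le_or_gt ρ' ρ with hsmall | hlarge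
  · have hsub : closedBall z' ρ' ⊆ closedBall z (3 * ρ) := fun u hu => by
      rw [mem_closedBall] at hu ⊢
      linarith [dist_triangle4 u z' y z, dist_comm z' y]
    have heq : ballAverage w z' ρ' = ballAverage ((closedBall z (3 * ρ)).indicator w) z' ρ' := by
      rw [ballAverage, ballAverage, setLIntegral_indicator measurableSet_closedBall,
        inter_eq_right.2 hsub]
    rw [heq]
    exact (ballAverage_le_ballMaximal hρ' (mem_closedBall.2 hy')).trans le_self_add
  · have hx' : x ∈ closedBall z' ((3 : ℕ) * ρ') := by
      rw [mem_closedBall]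
      push_cast
      linarith [dist_triangle4 x z y z', dist_comm z y]
    calc ballAverage w z' ρ' ≤ 3 ^ n * ballAverage w z' ((3 : ℕ) * ρ') := by
          exact_mod_cast ballAverage_le_pow_mul_ballAverage w z' hρ' (by norm_num : 1 ≤ 3)
      _ ≤ 3 ^ n * ballMaximal w x := by
          gcongr
          exact ballAverage_le_ballMaximal (by positivity) hx'
      _ ≤ _ := le_add_self

/-- `12 ^ n = 4 ^ n * 3 ^ n`: the Vitali enlargement factor times the tripling of `Q`. -/
def a1Const (n : ℕ) (δ : ℝ) : ℝ≥0∞ := kolmogorovConst δ * (12 ^ n) ^ δ + (3 ^ n) ^ δ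

lemma one_le_a1Const (n : ℕ) {δ : ℝ} (hδ : 0 ≤ δ) : 1 ≤ a1Const n δ :=
  calc 1 = (1 : ℝ≥0∞) ^ δ := (ENNReal.one_rpow δ).symm
    _ ≤ (3 ^ n) ^ δ := ENNReal.rpow_le_rpow (one_le_pow₀ (by norm_num)) hδ
    _ ≤ a1Const n δ := le_add_self

lemma a1Const_lt_top (n : ℕ) {δ : ℝ} (hδ : δ < 1) : a1Const n δ < ⊤ := by
  have hpow : ∀ c : ℝ≥0∞, c ≠ 0 → c ≠ ⊤ → (c ^ n) ^ δ < ⊤ := fun c h0 ht =>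
    lt_top_iff_ne_top.2 (rpow_ne_top_of_ne_zero (pow_ne_zero _ h0) (pow_ne_top ht))
  exact add_lt_top.2 ⟨mul_lt_top (kolmogorovConst_lt_top hδ) (hpow 12 (by norm_num) (by norm_num)),
    hpow 3 (by norm_num) (by norm_num)⟩

lemma setLIntegral_rpow_ballMaximal_indicator_le (w : (Fin n → ℝ) → ℝ≥0∞) {δ : ℝ} (hδ : 0 < δ)
    (hρ : 0 < ρ) (hx : x ∈ closedBall z ρ) :
    ∫⁻ y in closedBall z ρ, ballMaximal ((closedBall z (3 * ρ)).indicator w) y ^ δ ≤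
      kolmogorovConst δ * (12 ^ n * ballMaximal w x) ^ δ * volume (closedBall z ρ) := by
  set m := ballMaximal w x
  set w₁ := (closedBall z (3 * ρ)).indicator w
  have hw₁ : ∫⁻ y, w₁ y ≤ 3 ^ n * volume (closedBall z ρ) * m := by
    have h3 := volume_closedBall_natCast_mul z hρ.le 3
    push_cast at h3
    rw [lintegral_indicator measurableSet_closedBall, ← h3]
    exact setLIntegral_closedBall_le_mul_ballMaximal (by positivity)
      (closedBall_subset_closedBall (by linarith) hx)
  rcases eq_or_ne m 0 with hm0 | hm0
  · have hint : ∫⁻ y, w₁ y = 0 := by simpa [hm0] using hw₁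
    simp [ballMaximal_eq_zero_of_lintegral_eq_zero hint, ENNReal.zero_rpow_of_pos hδ]
  rcases eq_or_ne m ⊤ with hmt | hmt
  · rw [hmt, ENNReal.mul_top (by positivity), ENNReal.top_rpow_of_pos hδ,
      ENNReal.mul_top (one_pos.trans_le (one_le_kolmogorovConst δ)).ne',
      ENNReal.top_mul (measure_closedBall_pos volume z hρ).ne']
    exact le_top
  refine setLIntegral_rpow_le_of_measure_lt_le (mul_ne_zero (by positivity) hm0)
    (mul_ne_top (pow_ne_top ofNat_ne_top) hmt) (fun t ht0 htop => ?_) hδ.le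
  calc volume {y | t < ballMaximal w₁ y} ≤ 4 ^ n * (∫⁻ y, w₁ y) / t :=
        volume_setOf_lt_ballMaximal_le w₁ ht0 htop
    _ ≤ 4 ^ n * (3 ^ n * volume (closedBall z ρ) * m) / t := by gcongr
    _ = 12 ^ n * m / t * volume (closedBall z ρ) := by
      rw [show (12 : ℝ≥0∞) ^ n = 4 ^ n * 3 ^ n by rw [← mul_pow]; norm_num,
        ENNReal.div_eq_inv_mul, ENNReal.div_eq_inv_mul]
      ring

theorem ballAverage_rpow_ballMaximal_le (w : (Fin n → ℝ) → ℝ≥0∞) {δ : ℝ} (hδ : 0 < δ)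
    (hδ1 : δ ≤ 1) (hρ : 0 < ρ) (hx : x ∈ closedBall z ρ) :
    ballAverage (fun y => ballMaximal w y ^ δ) z ρ ≤ a1Const n δ * ballMaximal w x ^ δ := by
  set m := ballMaximal w x
  set Q := closedBall z ρ
  have hsplit : ∫⁻ y in Q, ballMaximal w y ^ δ ≤
      (∫⁻ y in Q, ballMaximal ((closedBall z (3 * ρ)).indicator w) y ^ δ) +
        (3 ^ n * m) ^ δ * volume Q := by
    rw [← setLIntegral_const, ← lintegral_add_right _ measurable_const]
    exact setLIntegral_mono' measurableSet_closedBall fun y hy =>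
      (ENNReal.rpow_le_rpow (ballMaximal_le_ballMaximal_indicator_add hx hy) hδ.le).trans
        (ENNReal.rpow_add_le_add_rpow _ _ hδ.le hδ1)
  calc ballAverage (fun y => ballMaximal w y ^ δ) z ρ
      = (volume Q)⁻¹ * ∫⁻ y in Q, ballMaximal w y ^ δ := rfl
    _ ≤ (volume Q)⁻¹ * ((kolmogorovConst δ * (12 ^ n * m) ^ δ + (3 ^ n * m) ^ δ) * volume Q) := by
        rw [add_mul]
        exact mul_le_mul_right (hsplit.trans
          (add_le_add_left (setLIntegral_rpow_ballMaximal_indicator_le w hδ hρ hx) _)) _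
    _ = a1Const n δ * m ^ δ := by
        rw [mul_comm, mul_assoc, ENNReal.mul_inv_cancel (measure_closedBall_pos volume z hρ).ne'
            measure_closedBall_lt_top.ne, mul_one, a1Const,
          ENNReal.mul_rpow_of_nonneg _ _ hδ.le, ENNReal.mul_rpow_of_nonneg _ _ hδ.le]
        ring

end A1

/-- if `M w < ∞` a.e. then for `0 < δ < 1`, `(M w)^δ` is an `A₁`
weight, with constant depending only on `n` and `δ`. -/
theorem statement_6 (n : ℕ) (δ : ℝ) (hδ : 0 < δ) (hδ' : δ < 1) :
    ∃ C : ℝ≥0∞, 0 < C ∧ C < ⊤ ∧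
      ∀ w : (Fin n → ℝ) → ℝ≥0∞,
        (∀ᵐ x : Fin n → ℝ, maxU n w x < ⊤) →
        ∀ᵐ x : Fin n → ℝ, maxU n (fun y => (maxU n w y) ^ δ) x ≤ C * (maxU n w x) ^ δ := by
  refine ⟨a1Const n δ, one_pos.trans_le (one_le_a1Const n hδ.le), a1Const_lt_top n hδ',
    fun w _ => ae_of_all _ fun x => ?_⟩
  simp only [maxU_eq_ballMaximal]
  exact ballMaximal_le fun z ρ hρ hx => ballAverage_rpow_ballMaximal_le w hδ hδ'.le hρ hx
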